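/- arXiv:2010.11409 — 2 statements merged into one kernel-verified Lean document; each statement's English description precedes it below -/
import Mathlib

section
/- Let Ω ⊂ ℝⁿ, n ≥ 2, be a bounded open set, let ω ∈ 𝕊^{n-1} be fixed, and let m ≥ 2 be a fixed integer. If f ∈ L^∞(Ω) satisfies ∫_Ω f (ω·∇v₁)^{m-1} (∇v₁ · ∇v₂) dx = 0 for all functions v₁, v₂ ∈ C^∞ on the closure of Ω that are harmonic in Ω, then f = 0 almost everywhere in Ω. -/
open MeasureTheory Metric Set

noncomputable section

abbrev En (n : ℕ) := EuclideanSpace ℝ (Fin n)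

/-- Partial derivative in the `i`-th coordinate direction. -/
def pd {n : ℕ} (i : Fin n) (f : En n → ℂ) (x : En n) : ℂ :=
  fderiv ℝ f x (EuclideanSpace.single i 1)

/-- Laplacian of a complex-valued function. -/
def lap {n : ℕ} (f : En n → ℂ) (x : En n) : ℂ :=
  ∑ i : Fin n, fderiv ℝ (fun y => pd i f y) x (EuclideanSpace.single i 1)

/-- Bilinear (non-conjugated) dot product of the gradients. -/
def gradDot {n : ℕ} (f g : En n → ℂ) (x : En n) : ℂ :=
  ∑ i : Fin n, pd i f x * pd i g x

/-- Directional derivative `ω·∇f` along a real vector `ω`. -/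
def dirD {n : ℕ} (ω : En n) (f : En n → ℂ) (x : En n) : ℂ :=
  ∑ i : Fin n, (ω i : ℂ) * pd i f x

open Real
open scoped FourierTransform SchwartzMap

variable {n : ℕ}

local notation "⟪" x ", " y "⟫" => inner (𝕜 := ℝ) x y

/-! ### Auxiliary linear algebra facts -/

lemma sum_mul_eq_inner (a b : En n) : ∑ i, a i * b i = ⟪a, b⟫ := by
  rw [PiLp.inner_apply]; simp [RCLike.inner_apply, mul_comm]

lemma sum_comb (a b c d : En n) :
    ∑ i, ((a i : ℂ) + (b i : ℂ) * Complex.I) * ((c i : ℂ) + (d i : ℂ) * Complex.I)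
      = ((⟪a, c⟫ - ⟪b, d⟫ : ℝ) : ℂ) + ((⟪a, d⟫ + ⟪b, c⟫ : ℝ) : ℂ) * Complex.I := by
  rw [← sum_mul_eq_inner, ← sum_mul_eq_inner, ← sum_mul_eq_inner, ← sum_mul_eq_inner]
  push_cast
  rw [← Finset.sum_sub_distrib, ← Finset.sum_add_distrib, Finset.sum_mul,
    ← Finset.sum_add_distrib]
  refine Finset.sum_congr rfl fun i _ => ?_
  linear_combination ((b i : ℂ) * (d i : ℂ)) * Complex.I_sq

lemma sum_comb' (r c d : En n) :
    ∑ i, (r i : ℂ) * ((c i : ℂ) + (d i : ℂ) * Complex.I)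
      = ((⟪r, c⟫ : ℝ) : ℂ) + ((⟪r, d⟫ : ℝ) : ℂ) * Complex.I := by
  rw [← sum_mul_eq_inner, ← sum_mul_eq_inner]
  push_cast
  rw [Finset.sum_mul, ← Finset.sum_add_distrib]
  refine Finset.sum_congr rfl fun i _ => ?_
  ring

lemma exists_p (hn : 2 ≤ n) (w ξ : En n) (hw : ‖w‖ = 1) (hξ : ξ ≠ 0) (r : ℝ) (hr : 0 < r) :
    ∃ p : En n, ⟪p, ξ⟫ = 0 ∧ ‖p‖ = r ∧ (⟪w, ξ⟫ = 0 → ⟪w, p⟫ ≠ 0) := by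
  by_cases h : ⟪w, ξ⟫ = (0:ℝ)
  · refine ⟨r • w, ?_, ?_, fun _ => ?_⟩
    · rw [real_inner_smul_left, h, mul_zero]
    · rw [norm_smul, hw, mul_one, Real.norm_eq_abs, abs_of_pos hr]
    · rw [real_inner_smul_right, real_inner_self_eq_norm_sq, hw]
      simpa using hr.ne'
  · have hfact : Fact (Module.finrank ℝ (En n) = (n - 1) + 1) :=
      ⟨by rw [finrank_euclideanSpace_fin]; omega⟩
    have hfr : Module.finrank ℝ ((ℝ ∙ ξ)ᗮ : Submodule ℝ (En n)) = n - 1 :=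
      Submodule.finrank_orthogonal_span_singleton hξ
    have hbot : ((ℝ ∙ ξ)ᗮ : Submodule ℝ (En n)) ≠ ⊥ := by
      intro hb
      rw [hb] at hfr
      rw [finrank_bot] at hfr
      omega
    obtain ⟨u, hu, hune⟩ := Submodule.exists_mem_ne_zero_of_ne_bot hbot
    have hunorm : ‖u‖ ≠ 0 := norm_ne_zero_iff.mpr hune
    refine ⟨(r / ‖u‖) • u, ?_, ?_, fun hc => absurd hc h⟩
    · have h0 : ⟪ξ, u⟫ = (0:ℝ) := Submodule.mem_orthogonal_singleton_iff_inner_right.mp hu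
      rw [real_inner_smul_left, real_inner_comm, h0, mul_zero]
    · rw [norm_smul, Real.norm_eq_abs, abs_div, abs_of_pos hr, abs_of_nonneg (norm_nonneg u),
        div_mul_cancel₀ _ hunorm]

/-! ### The linear continuous map `x ↦ ∑ ζ i * x i` and complex exponentials -/

def Lc (ζ : Fin n → ℂ) : En n →L[ℝ] ℂ :=
  ∑ i, ζ i • (Complex.ofRealCLM.comp (EuclideanSpace.proj i))

lemma Lc_apply (ζ : Fin n → ℂ) (x : En n) : Lc ζ x = ∑ i, ζ i * (x i : ℂ) := by
  simp [Lc, mul_comm]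

lemma Lc_single (ζ : Fin n → ℂ) (i : Fin n) : Lc ζ (EuclideanSpace.single i 1) = ζ i := by
  rw [Lc_apply]
  simp only [EuclideanSpace.single_apply]
  rw [Finset.sum_eq_single i] <;> simp +contextual

lemma pd_lin (ζ : Fin n → ℂ) (i : Fin n) (x : En n) : pd i (fun y => Lc ζ y) x = ζ i := by
  rw [pd]
  have : fderiv ℝ (fun y => Lc ζ y) x = Lc ζ := (Lc ζ).fderiv
  rw [this, Lc_single]

lemma contDiff_lin (ζ : Fin n → ℂ) : ContDiff ℝ (⊤ : ℕ∞) (fun y => Lc ζ y) := (Lc ζ).contDiff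

lemma lap_lin (ζ : Fin n → ℂ) (x : En n) : lap (fun y => Lc ζ y) x = 0 := by
  unfold lap
  refine Finset.sum_eq_zero fun i _ => ?_
  have h1 : (fun y => pd i (fun z => Lc ζ z) y) = fun _ => ζ i := funext (pd_lin ζ i)
  rw [h1, fderiv_fun_const]
  simp

lemma dirD_lin (w : En n) (ζ : Fin n → ℂ) (x : En n) :
    dirD w (fun y => Lc ζ y) x = ∑ i, (w i : ℂ) * ζ i := by
  unfold dirD
  exact Finset.sum_congr rfl fun i _ => by rw [pd_lin]

lemma gradDot_lin (ζ η : Fin n → ℂ) (x : En n) :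
    gradDot (fun y => Lc ζ y) (fun y => Lc η y) x = ∑ i, ζ i * η i := by
  unfold gradDot
  exact Finset.sum_congr rfl fun i _ => by rw [pd_lin, pd_lin]

def Eexp (ζ : Fin n → ℂ) (x : En n) : ℂ := Complex.exp (Lc ζ x)

lemma contDiff_Eexp (ζ : Fin n → ℂ) : ContDiff ℝ (⊤ : ℕ∞) (Eexp ζ) :=
  (Complex.contDiff_exp (𝕜 := ℝ)).comp (Lc ζ).contDiff

lemma hasFDerivAt_Eexp (ζ : Fin n → ℂ) (x : En n) :
    HasFDerivAt (Eexp ζ) (Eexp ζ x • (Lc ζ)) x :=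
  (Complex.hasDerivAt_exp (Lc ζ x)).comp_hasFDerivAt x (Lc ζ).hasFDerivAt

lemma pd_Eexp (ζ : Fin n → ℂ) (i : Fin n) (x : En n) :
    pd i (Eexp ζ) x = ζ i * Eexp ζ x := by
  rw [pd, (hasFDerivAt_Eexp ζ x).fderiv]
  simp [Lc_single, mul_comm]

lemma lap_Eexp (ζ : Fin n → ℂ) (x : En n) :
    lap (Eexp ζ) x = (∑ i, ζ i * ζ i) * Eexp ζ x := by
  unfold lap
  rw [Finset.sum_mul]
  refine Finset.sum_congr rfl fun i _ => ?_
  have h1 : (fun y => pd i (Eexp ζ) y) = fun y => ζ i * Eexp ζ y := funext (pd_Eexp ζ i)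
  rw [h1, (((hasFDerivAt_Eexp ζ x).const_mul (ζ i)).fderiv)]
  simp [Lc_single]
  ring

lemma dirD_Eexp (w : En n) (ζ : Fin n → ℂ) (x : En n) :
    dirD w (Eexp ζ) x = (∑ i, (w i : ℂ) * ζ i) * Eexp ζ x := by
  unfold dirD
  rw [Finset.sum_mul]
  exact Finset.sum_congr rfl fun i _ => by rw [pd_Eexp]; ring

lemma gradDot_Eexp (ζ η : Fin n → ℂ) (x : En n) :
    gradDot (Eexp ζ) (Eexp η) x = (∑ i, ζ i * η i) * (Eexp ζ x * Eexp η x) := by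
  unfold gradDot
  rw [Finset.sum_mul]
  exact Finset.sum_congr rfl fun i _ => by rw [pd_Eexp, pd_Eexp]; ring

/-! ### Injectivity of the Fourier transform, in the form we need -/

lemma inj_fourier {g : En n → ℂ} (hg : Integrable g volume)
    (h : ∀ ξ : En n, ∫ x, Complex.exp ((⟪ξ, x⟫ : ℝ) * Complex.I) * g x = 0) :
    ∀ᵐ x, g x = 0 := by
  apply ae_eq_zero_of_integral_contDiff_smul_eq_zero hg.locallyIntegrable
  intro φ hφ hsupp
  have hψs : ContDiff ℝ ((⊤ : ℕ∞) : WithTop ℕ∞) (fun x : En n => (φ x : ℂ)) :=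
    Complex.ofRealCLM.contDiff.comp hφ
  have hψsupp : HasCompactSupport (fun x : En n => (φ x : ℂ)) :=
    hsupp.comp_left (g := Complex.ofReal) Complex.ofReal_zero
  let S : 𝓢(En n, ℂ) :=
    { toFun := fun x => (φ x : ℂ)
      smooth' := hψs
      decay' := by
        intro k N
        have hc : Continuous fun x : En n =>
            ‖x‖ ^ k * ‖iteratedFDeriv ℝ N (fun x : En n => (φ x : ℂ)) x‖ :=
          ((continuous_norm.pow k)).mul
            ((hψs.continuous_iteratedFDeriv (by exact_mod_cast le_top)).norm)
        have hcs : HasCompactSupport fun x : En n =>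
            ‖x‖ ^ k * ‖iteratedFDeriv ℝ N (fun x : En n => (φ x : ℂ)) x‖ := by
          apply HasCompactSupport.mul_left
          exact (hψsupp.iteratedFDeriv N).norm
        obtain ⟨C, hC⟩ := hcs.exists_bound_of_continuous hc
        refine ⟨C, fun x => le_trans (le_abs_self _) ?_⟩
        rw [← Real.norm_eq_abs]
        exact hC x }
  let G : 𝓢(En n, ℂ) := SchwartzMap.fourierTransformCLM ℂ S
  have hGint : Integrable G volume := G.integrable
  have hinv : ∀ x : En n, S x = ∫ ξ : En n,
      Complex.exp ((2 * π * ⟪ξ, x⟫ : ℝ) * Complex.I) • G ξ := by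
    intro x
    have := Continuous.fourierInv_fourier_eq S.continuous S.integrable
      (by exact hGint)
    calc S x = 𝓕⁻ (𝓕 (S : En n → ℂ)) x := by rw [this]
    _ = _ := by rw [Real.fourierInv_eq']; rfl
  have hF : Integrable (Function.uncurry fun (x ξ : En n) =>
      (Complex.exp ((2 * π * ⟪ξ, x⟫ : ℝ) * Complex.I) • G ξ) * g x)
      (volume.prod volume) := by
    have hmaj : Integrable (fun z : En n × En n => ‖g z.1‖ * ‖G z.2‖)
        (volume.prod volume) := hg.norm.mul_prod hGint.norm
    apply hmaj.mono'
    · apply AEStronglyMeasurable.mul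
      · apply Continuous.aestronglyMeasurable
        apply Continuous.mul
        · apply Complex.continuous_exp.comp
          apply Continuous.mul _ continuous_const
          apply Complex.continuous_ofReal.comp
          exact (continuous_const.mul
            (continuous_inner.comp (continuous_snd.prodMk continuous_fst)))
        · exact G.continuous.comp continuous_snd
      · exact hg.1.comp_fst
    · apply Filter.Eventually.of_forall
      intro z
      simp only [Function.uncurry, norm_mul, smul_eq_mul]
      rw [Complex.norm_exp_ofReal_mul_I]
      simp [mul_comm]
  have key : ∫ x, (S x) * g x = 0 := by
    calc ∫ x, S x * g x
        = ∫ x, (∫ ξ : En n, Complex.exp ((2 * π * ⟪ξ, x⟫ : ℝ) * Complex.I) • G ξ) * g x := by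
          simp_rw [← hinv]
      _ = ∫ x, ∫ ξ : En n, (Complex.exp ((2 * π * ⟪ξ, x⟫ : ℝ) * Complex.I) • G ξ) * g x := by
          congr 1; funext x; rw [← integral_mul_const]
      _ = ∫ ξ : En n, ∫ x, (Complex.exp ((2 * π * ⟪ξ, x⟫ : ℝ) * Complex.I) • G ξ) * g x := by
          exact integral_integral_swap hF
      _ = ∫ ξ : En n, (∫ x, Complex.exp ((⟪(2 * π) • ξ, x⟫ : ℝ) * Complex.I) * g x) * G ξ := by
          congr 1; funext ξ
          rw [← integral_mul_const]
          congr 1; funext x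
          rw [real_inner_smul_left]
          simp only [smul_eq_mul]
          push_cast
          ring
      _ = ∫ ξ : En n, (0:ℂ) * G ξ := by
          congr 1; funext ξ
          rw [h ((2 * π) • ξ)]
      _ = 0 := by simp
  calc ∫ x, φ x • g x = ∫ x, S x * g x := by
        refine integral_congr_ae (Filter.Eventually.of_forall fun x => ?_)
        show φ x • g x = (φ x : ℂ) * g x
        rw [Complex.real_smul]
    _ = 0 := key

theorem stmt0 {n : ℕ} (hn : 2 ≤ n) (Ω : Set (En n)) (hΩo : IsOpen Ω)
    (hΩb : Bornology.IsBounded Ω) (ω : En n) (hω : ‖ω‖ = 1)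
    (m : ℕ) (hm : 2 ≤ m) (f : En n → ℂ)
    (hf : MemLp f ⊤ (volume.restrict Ω))
    (horth : ∀ v₁ v₂ : En n → ℂ,
      ContDiffOn ℝ (⊤ : ℕ∞) v₁ (closure Ω) → ContDiffOn ℝ (⊤ : ℕ∞) v₂ (closure Ω) →
      (∀ x ∈ Ω, lap v₁ x = 0) → (∀ x ∈ Ω, lap v₂ x = 0) →
      ∫ x in Ω, f x * (dirD ω v₁ x) ^ (m - 1) * gradDot v₁ v₂ x = 0) :
    ∀ᵐ x ∂(volume.restrict Ω), f x = 0 := by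
  have hΩm : MeasurableSet Ω := hΩo.measurableSet
  haveI hfin : IsFiniteMeasure (volume.restrict Ω) :=
    ⟨by rw [Measure.restrict_apply_univ]; exact hΩb.measure_lt_top⟩
  have hm1 : (1:ℕ) ≤ m := by omega
  have hmR : (m:ℝ) ≠ 0 := Nat.cast_ne_zero.mpr (by omega)
  have hfint : IntegrableOn f Ω volume :=
    MeasureTheory.MemLp.integrable le_rfl (hf.mono_exponent le_top)
  have hωω : ⟪ω, ω⟫ = (1:ℝ) := by
    rw [real_inner_self_eq_norm_sq, hω]; norm_num
  -- Step 1: all characters integrate `f` to zero on `Ω`.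
  have hchar : ∀ ξ : En n, ∫ x in Ω, Complex.exp ((⟪ξ, x⟫ : ℝ) * Complex.I) * f x = 0 := by
    intro ξ
    rcases eq_or_ne ξ 0 with hξ | hξ
    · -- use a linear harmonic function
      set ωc : Fin n → ℂ := fun i => (ω i : ℂ) with hωc
      have h0 := horth (fun y => Lc ωc y) (fun y => Lc ωc y)
        ((contDiff_lin ωc).contDiffOn) ((contDiff_lin ωc).contDiffOn)
        (fun x _ => lap_lin ωc x) (fun x _ => lap_lin ωc x)
      have hsum : ∑ i, (ω i : ℂ) * ωc i = 1 := by
        simp only [hωc]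
        have : ∑ i, ((ω i : ℂ) * (ω i : ℂ)) = ((∑ i, ω i * ω i : ℝ) : ℂ) := by
          push_cast; ring
        rw [this, sum_mul_eq_inner, hωω, Complex.ofReal_one]
      have hsum2 : ∑ i, ωc i * ωc i = 1 := by
        have : ∑ i, ωc i * ωc i = ∑ i, (ω i : ℂ) * ωc i := by
          refine Finset.sum_congr rfl fun i _ => by rw [hωc]
        rw [this, hsum]
      simp only [hξ, inner_zero_left, Complex.ofReal_zero, zero_mul, Complex.exp_zero, one_mul]
      calc ∫ x in Ω, f x
          = ∫ x in Ω, f x * (dirD ω (fun y => Lc ωc y) x) ^ (m - 1)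
              * gradDot (fun y => Lc ωc y) (fun y => Lc ωc y) x := by
            refine integral_congr_ae (Filter.Eventually.of_forall fun x => ?_)
            simp only [dirD_lin, gradDot_lin, hsum, hsum2, one_pow, mul_one]
        _ = 0 := h0
    · -- complex exponential case
      have hmR2 : (0:ℝ) < 2 * m := by
        have : (2:ℝ) ≤ (m:ℝ) := by exact_mod_cast hm
        linarith
      have hξn : (0:ℝ) < ‖ξ‖ := norm_pos_iff.mpr hξ
      obtain ⟨p, hpξ, hpn, hωp⟩ := exists_p hn ω ξ hω hξ (‖ξ‖/(2*m)) (div_pos hξn hmR2)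
      have hξp : ⟪ξ, p⟫ = 0 := by rw [real_inner_comm]; exact hpξ
      set q : En n := ((2*(m:ℝ))⁻¹) • ξ with hqdef
      set pm : En n := (-(m:ℝ)) • p with hpmdef
      set ξ2 : En n := ((2:ℝ)⁻¹) • ξ with hξ2def
      set ζ : Fin n → ℂ := fun i => (p i : ℂ) + (q i : ℂ) * Complex.I with hζdef
      set η : Fin n → ℂ := fun i => (pm i : ℂ) + (ξ2 i : ℂ) * Complex.I with hηdef
      -- inner product computations
      have hpp : ⟪p, p⟫ = ‖ξ‖^2 / (4*m^2) := by
        rw [real_inner_self_eq_norm_sq, hpn]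
        field_simp
        ring
      have hξξ : ⟪ξ, ξ⟫ = ‖ξ‖^2 := real_inner_self_eq_norm_sq ξ
      have hqq : ⟪q, q⟫ = ‖ξ‖^2 / (4*m^2) := by
        rw [hqdef, real_inner_smul_left, real_inner_smul_right, hξξ]
        field_simp
        ring
      have hpq : ⟪p, q⟫ = 0 := by rw [hqdef, real_inner_smul_right, hpξ, mul_zero]
      have hqp : ⟪q, p⟫ = 0 := by rw [real_inner_comm]; exact hpq
      have hζsq : ∑ i, ζ i * ζ i = 0 := by
        simp only [hζdef]
        rw [sum_comb p q p q, hpp, hqq, hpq, hqp]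
        simp
      have hpmpm : ⟪pm, pm⟫ = ‖ξ‖^2 / 4 := by
        rw [hpmdef, real_inner_smul_left, real_inner_smul_right, hpp]
        field_simp
      have hξ2ξ2 : ⟪ξ2, ξ2⟫ = ‖ξ‖^2 / 4 := by
        rw [hξ2def, real_inner_smul_left, real_inner_smul_right, hξξ]
        ring
      have hpmξ2 : ⟪pm, ξ2⟫ = 0 := by
        rw [hpmdef, hξ2def, real_inner_smul_left, real_inner_smul_right, hpξ]
        ring
      have hξ2pm : ⟪ξ2, pm⟫ = 0 := by rw [real_inner_comm]; exact hpmξ2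
      have hηsq : ∑ i, η i * η i = 0 := by
        simp only [hηdef]
        rw [sum_comb pm ξ2 pm ξ2, hpmpm, hξ2ξ2, hpmξ2, hξ2pm]
        simp
      -- the two nonzero constants
      have hwv : ∑ i, (ω i : ℂ) * ζ i = ((⟪ω, p⟫ : ℝ) : ℂ) + ((⟪ω, q⟫ : ℝ) : ℂ) * Complex.I := by
        simp only [hζdef]
        exact sum_comb' ω p q
      have hwne : ∑ i, (ω i : ℂ) * ζ i ≠ 0 := by
        rw [hwv]
        intro hzero
        rw [Complex.ext_iff] at hzero
        simp only [Complex.add_re, Complex.ofReal_re, Complex.mul_re, Complex.I_re,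
          Complex.I_im, Complex.ofReal_im, Complex.add_im, Complex.mul_im, Complex.zero_re,
          Complex.zero_im] at hzero
        obtain ⟨hre, him⟩ := hzero
        by_cases hcase : ⟪ω, ξ⟫ = (0:ℝ)
        · exact hωp hcase (by linarith [hre])
        · have : ⟪ω, q⟫ = (2*(m:ℝ))⁻¹ * ⟪ω, ξ⟫ := by
            rw [hqdef, real_inner_smul_right]
          have hq0 : ⟪ω, q⟫ ≠ 0 := by
            rw [this]
            exact mul_ne_zero (inv_ne_zero hmR2.ne') hcase
          apply hq0
          linarith [him]
      have hzv : ∑ i, ζ i * η i = ((-‖ξ‖^2/(2*m) : ℝ) : ℂ) := by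
        simp only [hζdef, hηdef]
        rw [sum_comb p q pm ξ2]
        have h1 : ⟪p, pm⟫ = -(m:ℝ) * (‖ξ‖^2 / (4*m^2)) := by
          rw [hpmdef, real_inner_smul_right, hpp]
        have h2 : ⟪q, ξ2⟫ = (2*(m:ℝ))⁻¹ * (2:ℝ)⁻¹ * ‖ξ‖^2 := by
          rw [hqdef, hξ2def, real_inner_smul_left, real_inner_smul_right, hξξ]
          ring
        have h3 : ⟪p, ξ2⟫ = 0 := by
          rw [hξ2def, real_inner_smul_right, hpξ]; ring
        have h4 : ⟪q, pm⟫ = 0 := by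
          rw [hqdef, hpmdef, real_inner_smul_left, real_inner_smul_right, hξp]; ring
        rw [h1, h2, h3, h4]
        have : -(m:ℝ) * (‖ξ‖^2 / (4*m^2)) - (2*(m:ℝ))⁻¹ * (2:ℝ)⁻¹ * ‖ξ‖^2 = -‖ξ‖^2/(2*m) := by
          field_simp
          try ring
        rw [this]
        simp
      have hzne : ∑ i, ζ i * η i ≠ 0 := by
        rw [hzv]
        rw [Complex.ofReal_ne_zero]
        intro hzero
        have : ‖ξ‖^2 = 0 := by
          field_simp at hzero
          try exact hzero
          try linarith
        exact absurd this (by positivity)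
      -- apply the hypothesis with two harmonic exponentials
      have h0 := horth (Eexp ζ) (Eexp η)
        ((contDiff_Eexp ζ).contDiffOn) ((contDiff_Eexp η).contDiffOn)
        (fun x _ => by rw [lap_Eexp, hζsq, zero_mul])
        (fun x _ => by rw [lap_Eexp, hηsq, zero_mul])
      -- the exponent combination
      have hvec : ∀ i, (m:ℂ) * ζ i + η i = (ξ i : ℂ) * Complex.I := by
        intro i
        simp only [hζdef, hηdef, hqdef, hpmdef, hξ2def, PiLp.smul_apply, smul_eq_mul]
        push_cast
        have hmC : (m:ℂ) ≠ 0 := Nat.cast_ne_zero.mpr (by omega)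
        field_simp
        ring
      have hLc : ∀ x : En n, (m:ℂ) * Lc ζ x + Lc η x = ((⟪ξ, x⟫ : ℝ) : ℂ) * Complex.I := by
        intro x
        rw [Lc_apply, Lc_apply, ← sum_mul_eq_inner ξ x]
        push_cast
        rw [Finset.mul_sum, ← Finset.sum_add_distrib, Finset.sum_mul]
        refine Finset.sum_congr rfl fun i _ => ?_
        have := hvec i
        linear_combination ((x i : ℂ)) * this
      have hE : ∀ x : En n, Eexp ζ x ^ (m-1) * (Eexp ζ x * Eexp η x)
          = Complex.exp (((⟪ξ, x⟫ : ℝ) : ℂ) * Complex.I) := by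
        intro x
        rw [show Eexp ζ x ^ (m-1) = Complex.exp (((m-1 : ℕ) : ℂ) * Lc ζ x) from
          (Complex.exp_nat_mul _ _).symm]
        rw [Eexp, Eexp, ← Complex.exp_add, ← Complex.exp_add, ← hLc x]
        congr 1
        rw [Nat.cast_sub hm1]
        push_cast
        ring
      -- rewrite the integrand
      set c : ℂ := (∑ i, (ω i : ℂ) * ζ i) ^ (m-1) * (∑ i, ζ i * η i) with hcdef
      have hcne : c ≠ 0 := mul_ne_zero (pow_ne_zero _ hwne) hzne
      have heq : ∀ x : En n, f x * (dirD ω (Eexp ζ) x) ^ (m-1) * gradDot (Eexp ζ) (Eexp η) x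
          = c * (Complex.exp (((⟪ξ, x⟫ : ℝ) : ℂ) * Complex.I) * f x) := by
        intro x
        rw [dirD_Eexp, gradDot_Eexp, ← hE x, hcdef, mul_pow]
        ring
      have h1 : ∫ x in Ω, c * (Complex.exp (((⟪ξ, x⟫ : ℝ) : ℂ) * Complex.I) * f x) = 0 := by
        rw [← h0]
        exact integral_congr_ae (Filter.Eventually.of_forall fun x => (heq x).symm)
      rw [integral_const_mul] at h1
      rcases mul_eq_zero.mp h1 with hbad | hgood
      · exact absurd hbad hcne
      · exact hgood
  -- Step 2: Fourier inversion
  set g : En n → ℂ := Ω.indicator f with hg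
  have hgint : Integrable g volume := hfint.integrable_indicator hΩm
  have h0 : ∀ ξ : En n, ∫ x, Complex.exp ((⟪ξ, x⟫ : ℝ) * Complex.I) * g x = 0 := by
    intro ξ
    have : (fun x => Complex.exp ((⟪ξ, x⟫ : ℝ) * Complex.I) * g x)
        = Ω.indicator (fun x => Complex.exp ((⟪ξ, x⟫ : ℝ) * Complex.I) * f x) := by
      funext x
      rw [hg, Set.indicator_mul_right]
    rw [this, integral_indicator hΩm]
    exact hchar ξ
  have hae := inj_fourier hgint h0
  filter_upwards [ae_restrict_of_ae hae, ae_restrict_mem hΩm] with x h1 h2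
  rwa [hg, Set.indicator_of_mem h2] at h1
end
end

section
/- Let Ω ⊂ ℝⁿ be a bounded open set. Suppose f ∈ L^∞(Ω) and there exist constants c > 0, ε₀ > 0, C > 0, M > 0 such that for all 0 < ε ≤ ε₀, all a > 1, all h > 0, and all z ∈ ℂⁿ with |z − 2iae₁| < 2εa, one has |∫_Ω f(x) e^{−(mi/h) x·z} dx| ≤ C e^{−ca/(4h)} e^{Mεa/h}. Then choosing ε < c/(8M), the Fourier–Laplace transform of f (extended by 0) decays exponentially in the region {Im w in a fixed open cone around the direction e₁}, i.e., |∫_Ω f(x) e^{−i x·w} dx| ≤ C e^{−c'|Im w|} for all w in a complex cone with axis 2i e₁, for some c' > 0. -/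
open MeasureTheory Metric Set

noncomputable section

/-- Norm of the imaginary part of a complex vector. -/
def imNorm {n : ℕ} (w : EuclideanSpace ℂ (Fin n)) : ℝ :=
  Real.sqrt (∑ i, (w i).im ^ 2)

/-! The substitution `w = (m/h) z` turns the phase of the hypothesis into that of the
Fourier–Laplace transform. A point `w` of the cone with apex parameter `s` is rescaled to
`z = (2/s) w`, which lies in the ball of the hypothesis with `a = 2`, and `h = 2m/s`. Then
`a/h = s/m`, so the bound reads `C exp((Mε - c/4) s/m) ≤ C exp(-(c/8) s/m)` once `8Mε < c`,
and `|Im w| ≤ |w| ≤ 2(1 + ε)s` on the cone turns this into exponential decay in `|Im w|`. -/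

open Complex

def fourierLaplace {n : ℕ} (Ω : Set (En n)) (f : En n → ℂ) (w : EuclideanSpace ℂ (Fin n)) : ℂ :=
  ∫ x in Ω, f x * exp (-I * ∑ i, (x i : ℂ) * w i)

theorem integral_exp_div_eq_fourierLaplace {n : ℕ} (Ω : Set (En n)) (f : En n → ℂ) (k h : ℂ)
    (z : EuclideanSpace ℂ (Fin n)) :
    ∫ x in Ω, f x * exp (-(k * I / h) * ∑ i, (x i : ℂ) * z i) =
      fourierLaplace Ω f ((k / h) • z) := by
  unfold fourierLaplace
  congr 1 with x
  simp only [PiLp.smul_apply, smul_eq_mul, mul_left_comm _ (k / h), ← Finset.mul_sum]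
  ring_nf

theorem imNorm_le_norm {n : ℕ} (w : EuclideanSpace ℂ (Fin n)) : imNorm w ≤ ‖w‖ := by
  rw [imNorm, EuclideanSpace.norm_eq]
  refine Real.sqrt_le_sqrt (Finset.sum_le_sum fun i _ => ?_)
  rw [← sq_abs]
  exact pow_le_pow_left₀ (abs_nonneg _) (abs_im_le_norm _) 2

section Cone

variable {E : Type*} [SeminormedAddCommGroup E] [NormedSpace ℂ E] {v w : E} {s δ : ℝ}

theorem norm_le_of_norm_sub_smul_lt (hs : 0 ≤ s) (hw : ‖w - (s : ℂ) • v‖ < δ * s) :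
    ‖w‖ ≤ (δ + ‖v‖) * s := by
  have hsv : ‖(s : ℂ) • v‖ = s * ‖v‖ := by rw [norm_smul, norm_real, Real.norm_of_nonneg hs]
  linarith [norm_le_norm_add_norm_sub' w ((s : ℂ) • v)]

theorem norm_smul_sub_smul_lt {t : ℝ} (ht : 0 < t) (hw : ‖w - (s : ℂ) • v‖ < δ * s) :
    ‖(t : ℂ) • w - ((t * s : ℝ) : ℂ) • v‖ < δ * (t * s) := by
  rw [ofReal_mul, mul_smul, ← smul_sub, norm_smul, norm_real, Real.norm_of_nonneg ht.le]
  nlinarith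

theorem natCast_div_mul_smul_smul {k : ℕ} {t : ℝ} (hk : (k : ℝ) ≠ 0) (ht : t ≠ 0) (w : E) :
    ((k : ℂ) / ((k * t : ℝ) : ℂ)) • (t : ℂ) • w = w := by
  rw [smul_smul, div_mul_eq_mul_div, ← ofReal_natCast, ← ofReal_mul,
    div_self (ofReal_ne_zero.mpr (mul_ne_zero hk ht)), one_smul]

end Cone

theorem exp_mul_exp_le_of_le_mul {c M ε m s x : ℝ} (hc : 0 ≤ c) (hm : 0 < m) (hs : 0 < s)
    (hε : 0 < ε) (hMε : M * ε ≤ c / 8) (hx : x ≤ 2 * (1 + ε) * s) :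
    Real.exp (-(c * 2) / (4 * (m * (2 / s)))) * Real.exp (M * ε * 2 / (m * (2 / s))) ≤
      Real.exp (-(c / (16 * m * (1 + ε))) * x) := by
  rw [← Real.exp_add, Real.exp_le_exp]
  calc -(c * 2) / (4 * (m * (2 / s))) + M * ε * 2 / (m * (2 / s))
      = -(c / 4 - M * ε) * (s / m) := by field_simp; ring
    _ ≤ -(c / (16 * m * (1 + ε))) * (2 * (1 + ε) * s) := by field_simp; nlinarith
    _ ≤ -(c / (16 * m * (1 + ε))) * x :=
        mul_le_mul_of_nonpos_left hx (neg_nonpos.mpr (by positivity))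

theorem stmt17 {n : ℕ} (hn : 2 ≤ n) (Ω : Set (En n)) (m : ℕ) (hm : 2 ≤ m)
    (f : En n → ℂ)
    (c ε₀ C M : ℝ) (hc : 0 < c) (hC : 0 < C) (hM : 0 < M)
    (hbound : ∀ ε : ℝ, 0 < ε → ε ≤ ε₀ → ∀ a : ℝ, 1 < a → ∀ h : ℝ, 0 < h →
      ∀ z : EuclideanSpace ℂ (Fin n),
        ‖z - (a : ℂ) • EuclideanSpace.single (⟨0, by omega⟩ : Fin n) (2 * Complex.I)‖ < 2 * ε * a →
        ‖∫ x in Ω, f x * Complex.exp (-((m : ℂ) * Complex.I / (h : ℂ)) *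
            ∑ i, (x i : ℂ) * z i)‖ ≤
          C * Real.exp (-(c * a) / (4 * h)) * Real.exp (M * ε * a / h)) :
    ∀ ε : ℝ, 0 < ε → ε ≤ ε₀ → ε < c / (8 * M) →
      ∃ c' : ℝ, 0 < c' ∧ ∃ C' : ℝ, 0 < C' ∧
        ∀ w : EuclideanSpace ℂ (Fin n),
          (∃ s : ℝ, 0 < s ∧
            ‖w - (s : ℂ) • EuclideanSpace.single (⟨0, by omega⟩ : Fin n) (2 * Complex.I)‖
              < 2 * ε * s) →
          ‖∫ x in Ω, f x * Complex.exp (-Complex.I * ∑ i, (x i : ℂ) * w i)‖ ≤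
            C' * Real.exp (-c' * imNorm w) := by
  intro ε hε hεε₀ hεc
  have hm0 : (0 : ℝ) < m := by norm_cast; omega
  have hMε : M * ε ≤ c / 8 := by rw [lt_div_iff₀ (by positivity)] at hεc; linarith
  refine ⟨c / (16 * m * (1 + ε)), by positivity, C, hC, ?_⟩
  rintro w ⟨s, hs, hws⟩
  set e := EuclideanSpace.single (⟨0, by omega⟩ : Fin n) (2 * I)
  set t := 2 / s
  have ht : 0 < t := by positivity
  have hz : ‖(t : ℂ) • w - ((2 : ℝ) : ℂ) • e‖ < 2 * ε * 2 := by
    simpa only [t, div_mul_cancel₀ 2 hs.ne'] using norm_smul_sub_smul_lt ht hws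
  have hFL := hbound ε hε hεε₀ 2 one_lt_two (m * t) (by positivity) _ hz
  rw [integral_exp_div_eq_fourierLaplace, natCast_div_mul_smul_smul hm0.ne' ht.ne'] at hFL
  have him : imNorm w ≤ 2 * (1 + ε) * s := by
    have he : ‖e‖ = 2 := by simp [e]
    linarith [imNorm_le_norm w, he ▸ norm_le_of_norm_sub_smul_lt hs.le hws]
  calc ‖fourierLaplace Ω f w‖ ≤ _ := hFL
    _ ≤ C * Real.exp (-(c / (16 * m * (1 + ε))) * imNorm w) := by
        rw [mul_assoc]
        gcongr
        exact exp_mul_exp_le_of_le_mul hc.le hm0 hs hε hMε him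
end
end
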